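/- arXiv:1401.6478 — 2 statements merged into one kernel-verified Lean document; each statement's English description precedes it below -/
import Mathlib

section
/- Consider a path P = (1,...,n) with energy dynamics E_{i+1} = E_i + r_i - e_{i,i+1} for recharge amounts r_i ≥ 0, strictly positive travel times τ_{i,i+1} > 0, strictly positive energy consumption e_{i,i+1} > 0, charging rate factor g > 0, energy feasibility 0 ≤ E_i for all i, and objective J(r) = ∑_{i=1}^{n-1} (τ_{i,i+1} + r_i·g). If a recharge vector r* minimizes J over all feasible recharge vectors with ∑_i r_i* > 0 (i.e., the vehicle recharges at least once), then the terminal energy satisfies E_n* = 0. -/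
/-!
If `E_n > 0`, let `k` be the last node where the vehicle recharges. After `k` the energy only
decreases, so it stays at least `E_n` on the rest of the path. Recharging
`δ = min (r_k, E_n) > 0` less at `k` lowers every later energy level by `δ` and keeps them
nonnegative, and it saves `δ g > 0` of charging time, contradicting optimality.
-/

open Finset

theorem Finset.exists_max_pos_of_sum_pos {ι : Type*} [LinearOrder ι] {s : Finset ι} {r : ι → ℝ}
    (h : 0 < ∑ i ∈ s, r i) : ∃ k ∈ s, 0 < r k ∧ ∀ j ∈ s, k < j → r j ≤ 0 := by
  have hne : (s.filter fun i => 0 < r i).Nonempty := by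
    obtain ⟨i, hi, hri⟩ := exists_lt_of_sum_lt (by simpa using h : ∑ _i ∈ s, (0 : ℝ) < ∑ i ∈ s, r i)
    exact ⟨i, mem_filter.mpr ⟨hi, hri⟩⟩
  obtain ⟨hks, hrk⟩ := mem_filter.mp (max'_mem _ hne)
  refine ⟨_, hks, hrk, fun j hj hkj => not_lt.mp fun hrj => ?_⟩
  exact hkj.not_ge (le_max' _ j (mem_filter.mpr ⟨hj, hrj⟩))

theorem energy_antitoneOn_of_no_recharge {n k : ℕ} {r e E : ℕ → ℝ}
    (hdyn : ∀ i ∈ Icc 1 (n - 1), E (i + 1) = E i + r i - e i)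
    (he : ∀ i ∈ Icc 1 (n - 1), 0 ≤ e i) (hr : ∀ i ∈ Icc 1 (n - 1), k < i → r i ≤ 0) :
    AntitoneOn E (Set.Icc (k + 1) n) := by
  refine antitoneOn_of_succ_le Set.ordConnected_Icc fun i _ hi hi' => ?_
  rw [Order.succ_eq_add_one] at hi' ⊢
  have hiI : i ∈ Icc 1 (n - 1) := by
    simp only [Set.mem_Icc] at hi hi'; simp only [mem_Icc]; omega
  linarith [hdyn i hiI, he i hiI, hr i hiI (by simp only [Set.mem_Icc] at hi; omega)]

theorem Finset.sum_update_sub {ι : Type*} [DecidableEq ι] {s : Finset ι} {k : ι} (hk : k ∈ s)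
    (r : ι → ℝ) (δ : ℝ) : ∑ i ∈ s, Function.update r k (r k - δ) i = ∑ i ∈ s, r i - δ := by
  rw [sum_update_of_mem hk, ← add_sum_erase s r hk, sdiff_singleton_eq_erase]; ring

structure IsFeasibleRecharge (n : ℕ) (e : ℕ → ℝ) (E₁ : ℝ) (r E : ℕ → ℝ) : Prop where
  energy_one : E 1 = E₁
  energy_succ : ∀ i ∈ Icc 1 (n - 1), E (i + 1) = E i + r i - e i
  recharge_nonneg : ∀ i ∈ Icc 1 (n - 1), 0 ≤ r i
  energy_nonneg : ∀ i ∈ Icc 1 n, 0 ≤ E i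

namespace IsFeasibleRecharge

variable {n : ℕ} {e : ℕ → ℝ} {E₁ : ℝ} {r E : ℕ → ℝ}

theorem reduce_recharge (h : IsFeasibleRecharge n e E₁ r E) {k : ℕ} (hk : 1 ≤ k) {δ : ℝ}
    (hδr : δ ≤ r k) (hδE : ∀ i ∈ Icc 1 n, k < i → δ ≤ E i) :
    IsFeasibleRecharge n e E₁ (Function.update r k (r k - δ))
      (fun i => if k < i then E i - δ else E i) where
  energy_one := by rw [if_neg (by omega), h.energy_one]
  energy_succ i hi := by
    have := h.energy_succ i hi
    rcases lt_trichotomy i k with hik | rfl | hki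
    · simp [Function.update_of_ne hik.ne, show ¬k < i + 1 by omega, hik.not_gt, this]
    · simp only [Nat.lt_succ_self, lt_irrefl, if_true, if_false, Function.update_self]
      linarith
    · simp [Function.update_of_ne hki.ne', hki, hki.trans (Nat.lt_succ_self i), this]; ring
  recharge_nonneg i hi := by
    rcases eq_or_ne i k with rfl | hik
    · simpa using hδr
    · simpa [Function.update_of_ne hik] using h.recharge_nonneg i hi
  energy_nonneg i hi := by
    split_ifs with hki
    · linarith [hδE i hi hki]
    · exact h.energy_nonneg i hi

end IsFeasibleRecharge

theorem optimal_recharge_zero_terminal_energy_general (n : ℕ)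
    (τ e : ℕ → ℝ) (g : ℝ) (hg : 0 < g)
    (he : ∀ i ∈ Icc 1 (n - 1), 0 < e i)
    (E₁ : ℝ)
    (rstar Estar : ℕ → ℝ)
    (hE1 : Estar 1 = E₁)
    (hdyn : ∀ i ∈ Icc 1 (n - 1), Estar (i + 1) = Estar i + rstar i - e i)
    (hrpos : ∀ i ∈ Icc 1 (n - 1), 0 ≤ rstar i)
    (hEpos : ∀ i ∈ Icc 1 n, 0 ≤ Estar i)
    (hsum : 0 < ∑ i ∈ Icc 1 (n - 1), rstar i)
    -- optimality of r* among all feasible recharge vectors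
    (hopt : ∀ r E : ℕ → ℝ, E 1 = E₁ →
      (∀ i ∈ Icc 1 (n - 1), E (i + 1) = E i + r i - e i) →
      (∀ i ∈ Icc 1 (n - 1), 0 ≤ r i) →
      (∀ i ∈ Icc 1 n, 0 ≤ E i) →
      ∑ i ∈ Icc 1 (n - 1), (τ i + rstar i * g) ≤ ∑ i ∈ Icc 1 (n - 1), (τ i + r i * g)) :
    Estar n = 0 := by
  obtain ⟨k, hk, hrk, hlast⟩ := exists_max_pos_of_sum_pos hsum
  have hkn := mem_Icc.mp hk
  have hEn_nonneg := hEpos n (mem_Icc.mpr ⟨by omega, le_rfl⟩)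
  by_contra hne
  set δ := min (rstar k) (Estar n)
  have hδ : 0 < δ := lt_min hrk (hEn_nonneg.lt_of_ne' hne)
  have hanti := energy_antitoneOn_of_no_recharge hdyn (fun i hi => (he i hi).le) hlast
  have hδE : ∀ i ∈ Icc 1 n, k < i → δ ≤ Estar i := fun i hi hki =>
    (min_le_right _ _).trans <| hanti ⟨hki, (mem_Icc.mp hi).2⟩ ⟨by omega, le_rfl⟩ (mem_Icc.mp hi).2
  have hfeas := (IsFeasibleRecharge.mk hE1 hdyn hrpos hEpos).reduce_recharge hkn.1
    (min_le_left _ _) hδE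
  have hcost := hopt _ _ hfeas.energy_one hfeas.energy_succ hfeas.recharge_nonneg hfeas.energy_nonneg
  simp only [sum_add_distrib, ← sum_mul, sum_update_sub hk] at hcost
  linarith [mul_pos hδ hg]

open Finset in
/-- Lemma 2 of the paper: along a fixed path `P = (1, …, n)` with energy dynamics
`E_{i+1} = E_i + r_i - e_{i,i+1}`, positive travel times and energy consumptions,
if an optimal recharge policy recharges a strictly positive total amount, then
the residual energy at the destination is zero: `E_n* = 0`. -/
theorem optimal_recharge_zero_terminal_energy (n : ℕ) (hn : 2 ≤ n)
    (τ e : ℕ → ℝ) (g : ℝ) (hg : 0 < g)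
    (hτ : ∀ i ∈ Icc 1 (n - 1), 0 < τ i)
    (he : ∀ i ∈ Icc 1 (n - 1), 0 < e i)
    (E₁ : ℝ)
    (rstar Estar : ℕ → ℝ)
    (hE1 : Estar 1 = E₁)
    (hdyn : ∀ i ∈ Icc 1 (n - 1), Estar (i + 1) = Estar i + rstar i - e i)
    (hrpos : ∀ i ∈ Icc 1 (n - 1), 0 ≤ rstar i)
    (hEpos : ∀ i ∈ Icc 1 n, 0 ≤ Estar i)
    (hsum : 0 < ∑ i ∈ Icc 1 (n - 1), rstar i)
    -- optimality of r* among all feasible recharge vectors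
    (hopt : ∀ r E : ℕ → ℝ, E 1 = E₁ →
      (∀ i ∈ Icc 1 (n - 1), E (i + 1) = E i + r i - e i) →
      (∀ i ∈ Icc 1 (n - 1), 0 ≤ r i) →
      (∀ i ∈ Icc 1 n, 0 ≤ E i) →
      ∑ i ∈ Icc 1 (n - 1), (τ i + rstar i * g) ≤ ∑ i ∈ Icc 1 (n - 1), (τ i + r i * g)) :
    Estar n = 0 :=
  optimal_recharge_zero_terminal_energy_general n τ e g hg he E₁ rstar Estar hE1 hdyn hrpos hEpos
    hsum hopt
end

section
/- Consider a path P = (1,...,n) with energy dynamics E_{i+1} = E_i + r_i - e_{i,i+1}, r_i ≥ 0, e_{i,i+1} > 0, and E_i ≥ 0 for all i. If E_n > 0 and ∑_{i=1}^{n-1} r_i > 0, then there exists an index j < n and Δ > 0 such that the perturbed recharge vector r' with r'_{j} = r_j - Δ and r'_i = r_i otherwise is still feasible (all energies nonnegative) and has strictly smaller total recharge ∑_i r'_i < ∑_i r_i. -/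
/-!
Let `j` be the last index with `r j > 0`. After `j` nothing is recharged, so the energy only
decreases from `j + 1` to `n` and stays at least `E n > 0` there. Lowering `r j` by
`Δ = min (r j) (E n)` leaves the energies up to `j` unchanged and lowers every later one by `Δ`,
which keeps them nonnegative.
-/

open Finset

lemma Finset.exists_pos_forall_gt_nonpos_of_sum_pos {α M : Type*} [LinearOrder α]
    [AddCommMonoid M] [LinearOrder M] [IsOrderedCancelAddMonoid M]
    {s : Finset α} {f : α → M} (hsum : 0 < ∑ i ∈ s, f i) :
    ∃ j ∈ s, 0 < f j ∧ ∀ i ∈ s, j < i → f i ≤ 0 := by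
  classical
  have hpos : (s.filter fun i => 0 < f i).Nonempty := by
    obtain ⟨i, hi, hfi⟩ :=
      exists_lt_of_sum_lt (s := s) (f := fun _ => 0) (g := f) (by simpa using hsum)
    exact ⟨i, mem_filter.mpr ⟨hi, hfi⟩⟩
  obtain ⟨hj, hfj⟩ := mem_filter.mp (max'_mem _ hpos)
  refine ⟨_, hj, hfj, fun i hi hlt => not_lt.mp fun hfi => ?_⟩
  exact (le_max' _ i (mem_filter.mpr ⟨hi, hfi⟩)).not_gt hlt

lemma antitoneOn_Icc_of_recharge_le {r e E : ℕ → ℝ} {a b : ℕ}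
    (hdyn : ∀ i ∈ Ico a b, E (i + 1) = E i + r i - e i)
    (hre : ∀ i ∈ Ico a b, r i ≤ e i) :
    AntitoneOn E (Set.Icc a b) := by
  refine antitoneOn_of_add_one_le Set.ordConnected_Icc fun i _ hi hi' => ?_
  have hmem : i ∈ Ico a b := mem_Ico.mpr ⟨hi.1, hi'.2⟩
  linarith [hdyn i hmem, hre i hmem]

def lowerAfter (E : ℕ → ℝ) (j : ℕ) (Δ : ℝ) (k : ℕ) : ℝ :=
  if k ≤ j then E k else E k - Δ

lemma lowerAfter_add_one {r e E : ℕ → ℝ} {i : ℕ} (j : ℕ) (Δ : ℝ)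
    (hdyn : E (i + 1) = E i + r i - e i) :
    lowerAfter E j Δ (i + 1) =
      lowerAfter E j Δ i + (if i = j then r i - Δ else r i) - e i := by
  unfold lowerAfter
  split_ifs <;> first | omega | linarith

lemma Finset.sum_ite_eq_sub_of_mem {α M : Type*} [DecidableEq α] [AddCommGroup M]
    {s : Finset α} {j : α} (hj : j ∈ s) (r : α → M) (Δ : M) :
    ∑ i ∈ s, (if i = j then r i - Δ else r i) = ∑ i ∈ s, r i - Δ := by
  have hite : ∀ i, (if i = j then r i - Δ else r i) = r i - if i = j then Δ else 0 := by
    intro i; split_ifs <;> simp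
  simp only [hite, sum_sub_distrib, sum_ite_eq', if_pos hj]

open Finset in
theorem recharge_perturbation_general (n : ℕ)
    (e : ℕ → ℝ) (he : ∀ i ∈ Icc 1 (n - 1), 0 < e i)
    (r E : ℕ → ℝ)
    (hdyn : ∀ i ∈ Icc 1 (n - 1), E (i + 1) = E i + r i - e i)
    (hr : ∀ i ∈ Icc 1 (n - 1), 0 ≤ r i)
    (hE : ∀ i ∈ Icc 1 n, 0 ≤ E i)
    (hEn : 0 < E n)
    (hsum : 0 < ∑ i ∈ Icc 1 (n - 1), r i) :
    ∃ j ∈ Icc 1 (n - 1), ∃ Δ : ℝ, 0 < Δ ∧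
      ∃ E' : ℕ → ℝ, E' 1 = E 1 ∧
        (∀ i ∈ Icc 1 (n - 1),
          E' (i + 1) = E' i + (if i = j then r i - Δ else r i) - e i) ∧
        (∀ i ∈ Icc 1 (n - 1), 0 ≤ if i = j then r i - Δ else r i) ∧
        (∀ i ∈ Icc 1 n, 0 ≤ E' i) ∧
        ∑ i ∈ Icc 1 (n - 1), (if i = j then r i - Δ else r i)
          < ∑ i ∈ Icc 1 (n - 1), r i := by
  obtain ⟨j, hj, hrj, hlast⟩ := exists_pos_forall_gt_nonpos_of_sum_pos hsum
  obtain ⟨hj1, hjn⟩ := mem_Icc.mp hj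
  have htail : ∀ i ∈ Ico (j + 1) n, i ∈ Icc 1 (n - 1) ∧ j < i := by
    intro i hi
    simp only [mem_Ico, mem_Icc] at hi ⊢
    omega
  have hanti : AntitoneOn E (Set.Icc (j + 1) n) :=
    antitoneOn_Icc_of_recharge_le (fun i hi => hdyn i (htail i hi).1)
      fun i hi => (hlast i (htail i hi).1 (htail i hi).2).trans (he i (htail i hi).1).le
  set Δ := min (r j) (E n)
  have hΔ : 0 < Δ := lt_min hrj hEn
  refine ⟨j, hj, Δ, hΔ, lowerAfter E j Δ, if_pos hj1,
    fun i hi => lowerAfter_add_one j Δ (hdyn i hi), fun i hi => ?_, fun i hi => ?_, ?_⟩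
  · split_ifs with hij
    · subst hij
      linarith [min_le_left (r i) (E n)]
    · exact hr i hi
  · unfold lowerAfter
    split_ifs with hij
    · exact hE i hi
    · have hnIcc : n ∈ Set.Icc (j + 1) n := ⟨by omega, le_rfl⟩
      have hi' : i ∈ Set.Icc (j + 1) n := ⟨by omega, (mem_Icc.mp hi).2⟩
      linarith [hanti hi' hnIcc hi'.2, min_le_right (r j) (E n)]
  · rw [sum_ite_eq_sub_of_mem hj]
    linarith

open Finset in
/-- Perturbation step in the proof of Lemma 2: if the terminal energy is
positive and some recharging occurs along the path, then some recharge `r_j`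
can be decreased by `Δ > 0` while keeping all residual energies nonnegative,
strictly decreasing the total recharge. -/
theorem recharge_perturbation (n : ℕ) (hn : 2 ≤ n)
    (e : ℕ → ℝ) (he : ∀ i ∈ Icc 1 (n - 1), 0 < e i)
    (r E : ℕ → ℝ)
    (hdyn : ∀ i ∈ Icc 1 (n - 1), E (i + 1) = E i + r i - e i)
    (hr : ∀ i ∈ Icc 1 (n - 1), 0 ≤ r i)
    (hE : ∀ i ∈ Icc 1 n, 0 ≤ E i)
    (hEn : 0 < E n)
    (hsum : 0 < ∑ i ∈ Icc 1 (n - 1), r i) :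
    ∃ j ∈ Icc 1 (n - 1), ∃ Δ : ℝ, 0 < Δ ∧
      ∃ E' : ℕ → ℝ, E' 1 = E 1 ∧
        (∀ i ∈ Icc 1 (n - 1),
          E' (i + 1) = E' i + (if i = j then r i - Δ else r i) - e i) ∧
        (∀ i ∈ Icc 1 (n - 1), 0 ≤ if i = j then r i - Δ else r i) ∧
        (∀ i ∈ Icc 1 n, 0 ≤ E' i) ∧
        ∑ i ∈ Icc 1 (n - 1), (if i = j then r i - Δ else r i)
          < ∑ i ∈ Icc 1 (n - 1), r i :=
  recharge_perturbation_general n e he r E hdyn hr hE hEn hsum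
end
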